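/- arXiv:1407.4424 — 2 statements merged into one kernel-verified Lean document; each statement's English description precedes it below -/
import Mathlib

section
/- For every N > 1 there exists a constant C > 0, depending only on N, such that for all a, a' > 0 and all θ ∈ ℝ with |θ| ≤ π/2: ∫_{−π}^{π} (1 + a|sin φ|)^{−N} (1 + a'|sin(φ + θ)|)^{−N} dφ ≤ C · max{a, a'}^{−1} · (1 + min{a, a'}·|θ|)^{−N}. -/
open MeasureTheory Real Set

/-!
Let `w_b = sinWeight N b`. By Jordan's inequality `|sin φ| ≥ 2|φ|/π`, each hump of
`w_b` is dominated by a rescaled copy of the integrable weight `(1 + |x|)^(-N)`, so the integral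
of `w_b` over a period is `O(1/b)`. Bounding the factor with the smaller parameter by `1` gives
the bound `O(1 / max a a')`, which suffices when `min a a' * |θ| ≤ 1`. Otherwise
`|sin φ| + |sin (φ + θ)| ≥ |sin θ| ≥ 2|θ|/π`, so at each point one of the two factors is at most
its value at `|sin| = |θ|/π`, and integrating the other factor gives
`O((1 + a|θ|)^(-N) / a' + (1 + a'|θ|)^(-N) / a)`. Finally, for `x t ≥ 1` the quantity
`x (1 + x t)^(-N)` is comparable to `x^(1-N) t^(-N)`, which decreases in `x` because `N > 1`.
-/

noncomputable section

def sinWeight (N b φ : ℝ) : ℝ := (1 + b * |sin φ|) ^ (-N)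

section SinWeight

variable {N b : ℝ}

lemma sinWeight_nonneg (hb : 0 ≤ b) (φ : ℝ) : 0 ≤ sinWeight N b φ :=
  rpow_nonneg (by positivity) _

lemma sinWeight_le_one (hN : 0 ≤ N) (hb : 0 ≤ b) (φ : ℝ) : sinWeight N b φ ≤ 1 :=
  rpow_le_one_of_one_le_of_nonpos (by simp only [le_add_iff_nonneg_right]; positivity)
    (neg_nonpos.2 hN)

lemma sinWeight_le_of_le_abs_sin (hN : 0 ≤ N) (hb : 0 ≤ b) {s φ : ℝ} (hs : 0 ≤ s)
    (h : s ≤ |sin φ|) : sinWeight N b φ ≤ (1 + b * s) ^ (-N) :=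
  rpow_le_rpow_of_nonpos (by positivity) (by gcongr) (neg_nonpos.2 hN)

lemma continuous_sinWeight (hb : 0 ≤ b) : Continuous (sinWeight N b) :=
  (by fun_prop : Continuous fun φ => 1 + b * |sin φ|).rpow_const
    fun _ => Or.inl (by positivity)

lemma sinWeight_periodic : Function.Periodic (sinWeight N b) π := fun φ => by
  simp only [sinWeight, sin_add_pi, abs_neg]

end SinWeight

section Integrals

variable {N b : ℝ}

lemma integrable_one_add_abs_rpow_neg (hN : 1 < N) :
    Integrable fun x : ℝ => (1 + |x|) ^ (-N) := by
  simpa only [norm_eq_abs] using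
    integrable_one_add_norm (E := ℝ) (μ := volume) (by simpa using hN)

lemma integral_one_add_abs_rpow_neg_pos (hN : 1 < N) :
    0 < ∫ x : ℝ, (1 + |x|) ^ (-N) :=
  integral_pos_of_integrable_nonneg_nonzero (x := 0)
    ((by fun_prop : Continuous fun x : ℝ => 1 + |x|).rpow_const fun _ => Or.inl (by positivity))
    (integrable_one_add_abs_rpow_neg hN) (fun _ => rpow_nonneg (by positivity) _) (by simp)

lemma intervalIntegral_sinWeight_le (hN : 1 < N) (hb : 0 < b) :
    ∫ φ in -(π / 2)..π / 2, sinWeight N b φ ≤ π / (2 * b) * ∫ x : ℝ, (1 + |x|) ^ (-N) := by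
  have hπ := pi_pos
  set c : ℝ := 2 * b / π
  have hc : 0 < c := by positivity
  have hint : Integrable fun x : ℝ => (1 + |c * x|) ^ (-N) :=
    (integrable_one_add_abs_rpow_neg hN).comp_mul_left' hc.ne'
  have hjordan : ∀ φ ∈ Icc (-(π / 2)) (π / 2), sinWeight N b φ ≤ (1 + |c * φ|) ^ (-N) := by
    intro φ hφ
    have h := mul_abs_le_abs_sin (abs_le.2 hφ)
    refine rpow_le_rpow_of_nonpos (by positivity) ?_ (by linarith)
    rw [abs_mul, abs_of_pos hc]
    calc 1 + c * |φ| = 1 + b * (2 / π * |φ|) := by ring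
      _ ≤ 1 + b * |sin φ| := by gcongr
  calc ∫ φ in -(π / 2)..π / 2, sinWeight N b φ
      ≤ ∫ φ in -(π / 2)..π / 2, (1 + |c * φ|) ^ (-N) :=
        intervalIntegral.integral_mono_on (by linarith)
          ((continuous_sinWeight hb.le).intervalIntegrable _ _) hint.intervalIntegrable hjordan
    _ ≤ ∫ x : ℝ, (1 + |c * x|) ^ (-N) := by
        rw [intervalIntegral.integral_of_le (by linarith)]
        exact setIntegral_le_integral hint (.of_forall fun _ => rpow_nonneg (by positivity) _)
    _ = π / (2 * b) * ∫ x : ℝ, (1 + |x|) ^ (-N) := by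
        rw [Measure.integral_comp_mul_left (fun x => (1 + |x|) ^ (-N)), abs_of_pos (inv_pos.2 hc),
          smul_eq_mul, inv_div]

lemma integral_Icc_sinWeight_add (hb : 0 ≤ b) (θ : ℝ) :
    ∫ φ in Icc (-π) π, sinWeight N b (φ + θ) = 2 * ∫ φ in -(π / 2)..π / 2, sinWeight N b φ := by
  have hπ := pi_pos
  rw [integral_Icc_eq_integral_Ioc, ← intervalIntegral.integral_of_le (by linarith),
    intervalIntegral.integral_comp_add_right (sinWeight N b) θ,
    show π + θ = -π + θ + (2 : ℤ) • π by simp only [zsmul_eq_mul]; push_cast; ring,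
    sinWeight_periodic.intervalIntegral_add_zsmul_eq 2 _
      fun _ _ => (continuous_sinWeight hb).intervalIntegrable _ _,
    sinWeight_periodic.intervalIntegral_add_eq _ (-(π / 2)),
    show -(π / 2) + π = π / 2 by ring, zsmul_eq_mul, Int.cast_ofNat]

lemma integral_Icc_sinWeight_add_le (hN : 1 < N) (hb : 0 < b) (θ : ℝ) :
    ∫ φ in Icc (-π) π, sinWeight N b (φ + θ) ≤ π * (∫ x : ℝ, (1 + |x|) ^ (-N)) / b := by
  rw [integral_Icc_sinWeight_add hb.le]
  calc 2 * ∫ φ in -(π / 2)..π / 2, sinWeight N b φ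
      ≤ 2 * (π / (2 * b) * ∫ x : ℝ, (1 + |x|) ^ (-N)) := by
        gcongr; exact intervalIntegral_sinWeight_le hN hb
    _ = π * (∫ x : ℝ, (1 + |x|) ^ (-N)) / b := by field_simp

end Integrals

section Arithmetic

variable {N x y t : ℝ}

lemma one_add_mul_div_rpow_neg_le (hN : 0 ≤ N) {c : ℝ} (hc : 1 ≤ c) (hx : 0 ≤ x) (ht : 0 ≤ t) :
    (1 + x * (t / c)) ^ (-N) ≤ c ^ N * (1 + x * t) ^ (-N) := by
  have hc₀ : 0 < c := by linarith
  have hbase : 1 + x * t ≤ c * (1 + x * (t / c)) := by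
    have : c * (1 + x * (t / c)) = c + x * t := by field_simp
    linarith
  calc (1 + x * (t / c)) ^ (-N) = c ^ N * (c * (1 + x * (t / c))) ^ (-N) := by
        rw [mul_rpow hc₀.le (by positivity), ← mul_assoc, ← rpow_add hc₀, add_neg_cancel,
          rpow_zero, one_mul]
    _ ≤ c ^ N * (1 + x * t) ^ (-N) :=
        mul_le_mul_of_nonneg_left
          (rpow_le_rpow_of_nonpos (by positivity) hbase (by linarith)) (by positivity)

lemma mul_one_add_mul_rpow_neg_le (hN : 1 ≤ N) (hy : 0 < y) (hyx : y ≤ x) (hyt : 1 ≤ y * t) :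
    x * (1 + x * t) ^ (-N) ≤ 2 ^ N * (y * (1 + y * t) ^ (-N)) := by
  have ht : 0 < t := pos_of_mul_pos_right (one_pos.trans_le hyt) hy.le
  have hx : 0 < x := hy.trans_le hyx
  have hone_sub : ∀ {u : ℝ}, 0 < u → u ^ (1 - N) = u * u ^ (-N) := fun hu => by
    rw [sub_eq_add_neg, rpow_add hu, rpow_one]
  have htwo : (2 : ℝ) ^ N * 2 ^ (-N) = 1 := by rw [← rpow_add two_pos, add_neg_cancel, rpow_zero]
  calc x * (1 + x * t) ^ (-N)
      ≤ x * (x * t) ^ (-N) :=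
        mul_le_mul_of_nonneg_left
          (rpow_le_rpow_of_nonpos (by positivity) (by linarith) (by linarith)) hx.le
    _ = t⁻¹ * (x * t) ^ (1 - N) := by rw [hone_sub (by positivity)]; field_simp
    _ ≤ t⁻¹ * (y * t) ^ (1 - N) :=
        mul_le_mul_of_nonneg_left
          (rpow_le_rpow_of_nonpos (by positivity) (by gcongr) (by linarith)) (by positivity)
    _ = y * (y * t) ^ (-N) := by rw [hone_sub (by positivity)]; field_simp
    _ = 2 ^ N * (y * (2 * (y * t)) ^ (-N)) := by
        rw [mul_rpow zero_le_two (by positivity),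
          show ∀ w : ℝ, 2 ^ N * (y * (2 ^ (-N) * w)) = (2 ^ N * 2 ^ (-N)) * (y * w) from
            fun w => by ring, htwo, one_mul]
    _ ≤ 2 ^ N * (y * (1 + y * t) ^ (-N)) :=
        mul_le_mul_of_nonneg_left (mul_le_mul_of_nonneg_left
          (rpow_le_rpow_of_nonpos (by positivity) (by linarith) (by linarith)) hy.le)
          (by positivity)

lemma one_add_mul_rpow_neg_mul_inv_le (hN : 1 ≤ N) (hx : 0 < x) (hy : 0 < y)
    (hmin : 1 ≤ min x y * t) :
    (1 + x * t) ^ (-N) * y⁻¹ ≤ 2 ^ N * (max x y)⁻¹ * (1 + min x y * t) ^ (-N) := by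
  have ht : 0 < t := pos_of_mul_pos_right (one_pos.trans_le hmin) (lt_min hx hy).le
  rcases le_total x y with hxy | hyx
  · rw [min_eq_left hxy, max_eq_right hxy, mul_comm, mul_assoc]
    exact le_mul_of_one_le_left (by positivity) (one_le_rpow one_le_two (by linarith))
  · rw [min_eq_right hyx, max_eq_left hyx] at *
    calc (1 + x * t) ^ (-N) * y⁻¹ = x * (1 + x * t) ^ (-N) * (x⁻¹ * y⁻¹) := by field_simp
      _ ≤ 2 ^ N * (y * (1 + y * t) ^ (-N)) * (x⁻¹ * y⁻¹) :=
          mul_le_mul_of_nonneg_right (mul_one_add_mul_rpow_neg_le hN hy hyx hmin) (by positivity)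
      _ = 2 ^ N * x⁻¹ * (1 + y * t) ^ (-N) := by field_simp

lemma one_le_two_rpow_mul_one_add_rpow_neg {s : ℝ} (hN : 0 ≤ N) (hs₀ : 0 ≤ s) (hs₁ : s ≤ 1) :
    1 ≤ 2 ^ N * (1 + s) ^ (-N) := by
  rw [rpow_neg (by positivity), ← div_eq_mul_inv, ← div_rpow zero_le_two (by positivity)]
  exact one_le_rpow (by rw [le_div_iff₀ (by positivity)]; linarith) hN

lemma one_add_mul_div_pi_rpow_neg_mul_inv_le (hN : 1 ≤ N) (hx : 0 < x)
    (hy : 0 < y) (hmin : 1 ≤ min x y * t) :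
    (1 + x * (t / π)) ^ (-N) * y⁻¹ ≤ π ^ N * 2 ^ N * (max x y)⁻¹ * (1 + min x y * t) ^ (-N) := by
  have ht : 0 ≤ t := (pos_of_mul_pos_right (one_pos.trans_le hmin) (lt_min hx hy).le).le
  calc (1 + x * (t / π)) ^ (-N) * y⁻¹ ≤ π ^ N * ((1 + x * t) ^ (-N) * y⁻¹) := by
        rw [← mul_assoc]
        exact mul_le_mul_of_nonneg_right
          (one_add_mul_div_rpow_neg_le (by linarith) (by linarith [pi_gt_three]) hx.le ht)
          (by positivity)
    _ ≤ π ^ N * (2 ^ N * (max x y)⁻¹ * (1 + min x y * t) ^ (-N)) :=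
        mul_le_mul_of_nonneg_left (one_add_mul_rpow_neg_mul_inv_le hN hx hy hmin) (by positivity)
    _ = π ^ N * 2 ^ N * (max x y)⁻¹ * (1 + min x y * t) ^ (-N) := by ring

end Arithmetic

lemma abs_sin_le_abs_sin_add_abs_sin_add (φ θ : ℝ) : |sin θ| ≤ |sin φ| + |sin (φ + θ)| := by
  have h : sin θ = sin (φ + θ) * cos φ - cos (φ + θ) * sin φ := by
    rw [← sin_sub, add_sub_cancel_left]
  calc |sin θ| ≤ |sin (φ + θ)| * |cos φ| + |cos (φ + θ)| * |sin φ| := by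
        rw [h, ← abs_mul, ← abs_mul]; exact abs_sub _ _
    _ ≤ |sin (φ + θ)| * 1 + 1 * |sin φ| := by
        gcongr
        exacts [abs_cos_le_one φ, abs_cos_le_one (φ + θ)]
    _ = |sin φ| + |sin (φ + θ)| := by ring

section Product

variable {N a a' : ℝ}

lemma sinWeight_mul_sinWeight_add_le (hN : 0 ≤ N) (ha : 0 ≤ a) (ha' : 0 ≤ a') {θ : ℝ}
    (hθ : |θ| ≤ π / 2) (φ : ℝ) :
    sinWeight N a φ * sinWeight N a' (φ + θ) ≤
      (1 + a * (|θ| / π)) ^ (-N) * sinWeight N a' (φ + θ) +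
        (1 + a' * (|θ| / π)) ^ (-N) * sinWeight N a φ := by
  have hs : 0 ≤ |θ| / π := by positivity
  have hsum : 2 * (|θ| / π) ≤ |sin φ| + |sin (φ + θ)| := by
    have := mul_abs_le_abs_sin hθ
    have := abs_sin_le_abs_sin_add_abs_sin_add φ θ
    linarith [show 2 * (|θ| / π) = 2 / π * |θ| by ring]
  rcases le_or_gt (|θ| / π) |sin φ| with hφ | hφ
  · calc sinWeight N a φ * sinWeight N a' (φ + θ)
        ≤ (1 + a * (|θ| / π)) ^ (-N) * sinWeight N a' (φ + θ) :=
          mul_le_mul_of_nonneg_right (sinWeight_le_of_le_abs_sin hN ha hs hφ)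
            (sinWeight_nonneg ha' _)
      _ ≤ _ := le_add_of_nonneg_right
          (mul_nonneg (rpow_nonneg (by positivity) _) (sinWeight_nonneg ha _))
  · calc sinWeight N a φ * sinWeight N a' (φ + θ)
        ≤ (1 + a' * (|θ| / π)) ^ (-N) * sinWeight N a φ := by
          rw [mul_comm]
          exact mul_le_mul_of_nonneg_right
            (sinWeight_le_of_le_abs_sin hN ha' hs (by linarith)) (sinWeight_nonneg ha _)
      _ ≤ _ := le_add_of_nonneg_left
          (mul_nonneg (rpow_nonneg (by positivity) _) (sinWeight_nonneg ha' _))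

lemma integral_sinWeight_mul_sinWeight_add_le_max (hN : 1 < N) (ha : 0 < a) (ha' : 0 < a')
    (θ : ℝ) :
    ∫ φ in Icc (-π) π, sinWeight N a φ * sinWeight N a' (φ + θ) ≤
      π * (∫ x : ℝ, (1 + |x|) ^ (-N)) / max a a' := by
  have hA : IntegrableOn (sinWeight N a) (Icc (-π) π) :=
    (continuous_sinWeight ha.le).integrableOn_Icc
  have hB : Continuous fun φ => sinWeight N a' (φ + θ) :=
    (continuous_sinWeight ha'.le).comp (continuous_add_const θ)
  have hprod := hA.mul_continuousOn hB.continuousOn isCompact_Icc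
  rcases le_total a a' with h | h
  · rw [max_eq_right h]
    refine (setIntegral_mono hprod hB.integrableOn_Icc fun φ => ?_).trans
      (integral_Icc_sinWeight_add_le hN ha' θ)
    exact mul_le_of_le_one_left (sinWeight_nonneg ha'.le _) (sinWeight_le_one (by linarith) ha.le _)
  · rw [max_eq_left h]
    refine (setIntegral_mono hprod hA fun φ => ?_).trans
      (by simpa only [add_zero] using integral_Icc_sinWeight_add_le hN ha 0)
    exact mul_le_of_le_one_right (sinWeight_nonneg ha.le φ)
      (sinWeight_le_one (by linarith) ha'.le _)

lemma integral_sinWeight_mul_sinWeight_add_le (hN : 1 < N) (ha : 0 < a) (ha' : 0 < a')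
    {θ : ℝ} (hθ : |θ| ≤ π / 2) :
    ∫ φ in Icc (-π) π, sinWeight N a φ * sinWeight N a' (φ + θ) ≤
      π * (∫ x : ℝ, (1 + |x|) ^ (-N)) *
        ((1 + a * (|θ| / π)) ^ (-N) * a'⁻¹ + (1 + a' * (|θ| / π)) ^ (-N) * a⁻¹) := by
  set K := π * ∫ x : ℝ, (1 + |x|) ^ (-N)
  set c := (1 + a * (|θ| / π)) ^ (-N)
  set c' := (1 + a' * (|θ| / π)) ^ (-N)
  have hc : 0 ≤ c := rpow_nonneg (by positivity) _
  have hc' : 0 ≤ c' := rpow_nonneg (by positivity) _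
  have hA : IntegrableOn (sinWeight N a) (Icc (-π) π) :=
    (continuous_sinWeight ha.le).integrableOn_Icc
  have hB : Continuous fun φ => sinWeight N a' (φ + θ) :=
    (continuous_sinWeight ha'.le).comp (continuous_add_const θ)
  have hA' : ∫ φ in Icc (-π) π, sinWeight N a φ ≤ K / a := by
    simpa only [add_zero] using integral_Icc_sinWeight_add_le hN ha 0
  calc ∫ φ in Icc (-π) π, sinWeight N a φ * sinWeight N a' (φ + θ)
      ≤ ∫ φ in Icc (-π) π, (c * sinWeight N a' (φ + θ) + c' * sinWeight N a φ) :=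
        setIntegral_mono (hA.mul_continuousOn hB.continuousOn isCompact_Icc)
          ((hB.integrableOn_Icc.const_mul c).add (hA.const_mul c'))
          (sinWeight_mul_sinWeight_add_le (by linarith) ha.le ha'.le hθ)
    _ = c * (∫ φ in Icc (-π) π, sinWeight N a' (φ + θ)) +
          c' * ∫ φ in Icc (-π) π, sinWeight N a φ := by
        rw [integral_add (hB.integrableOn_Icc.const_mul c) (hA.const_mul c'), integral_const_mul,
          integral_const_mul]
    _ ≤ c * (K / a') + c' * (K / a) :=
        add_le_add (mul_le_mul_of_nonneg_left (integral_Icc_sinWeight_add_le hN ha' θ) hc)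
          (mul_le_mul_of_nonneg_left hA' hc')
    _ = K * (c * a'⁻¹ + c' * a⁻¹) := by ring

end Product

/-- angular version of the decay estimate. For every `N > 1` there is
`C > 0` depending only on `N` such that for all `a, a' > 0` and `|θ| ≤ π/2`,
`∫_{-π}^{π} (1 + a|sin φ|)^{-N} (1 + a'|sin(φ+θ)|)^{-N} dφ
   ≤ C · max{a,a'}⁻¹ · (1 + min{a,a'}|θ|)^{-N}`. -/
theorem stmt6 (N : ℝ) (hN : 1 < N) :
    ∃ C > (0 : ℝ), ∀ a a' : ℝ, 0 < a → 0 < a' → ∀ θ : ℝ, |θ| ≤ π / 2 →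
      (∫ φ in Set.Icc (-π) π,
          (1 + a * |Real.sin φ|) ^ (-N) * (1 + a' * |Real.sin (φ + θ)|) ^ (-N))
        ≤ C * (max a a')⁻¹ * (1 + min a a' * |θ|) ^ (-N) := by
  have hπ := pi_pos
  set K := π * ∫ x : ℝ, (1 + |x|) ^ (-N)
  have hK : 0 < K := mul_pos hπ (integral_one_add_abs_rpow_neg_pos hN)
  refine ⟨2 * π ^ N * 2 ^ N * K, by positivity, fun a a' ha ha' θ hθ => ?_⟩
  change ∫ φ in Icc (-π) π, sinWeight N a φ * sinWeight N a' (φ + θ) ≤ _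
  rcases le_total (min a a' * |θ|) 1 with hnear | hfar
  · have h2 := one_le_two_rpow_mul_one_add_rpow_neg (N := N) (by linarith) (by positivity) hnear
    have hπN : 1 ≤ π ^ N := one_le_rpow (by linarith [pi_gt_three]) (by linarith)
    calc _ ≤ K / max a a' := integral_sinWeight_mul_sinWeight_add_le_max hN ha ha' θ
      _ = K * (max a a')⁻¹ * 1 := by ring
      _ ≤ K * (max a a')⁻¹ * (2 * π ^ N * (2 ^ N * (1 + min a a' * |θ|) ^ (-N))) := by
          gcongr; nlinarith
      _ = _ := by ring
  · have h₁ := one_add_mul_div_pi_rpow_neg_mul_inv_le hN.le ha ha' hfar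
    have h₂ := one_add_mul_div_pi_rpow_neg_mul_inv_le hN.le ha' ha (by rwa [min_comm])
    rw [min_comm, max_comm] at h₂
    calc _ ≤ K * ((1 + a * (|θ| / π)) ^ (-N) * a'⁻¹ + (1 + a' * (|θ| / π)) ^ (-N) * a⁻¹) :=
          integral_sinWeight_mul_sinWeight_add_le hN ha ha' hθ
      _ ≤ K * (π ^ N * 2 ^ N * (max a a')⁻¹ * (1 + min a a' * |θ|) ^ (-N) +
            π ^ N * 2 ^ N * (max a a')⁻¹ * (1 + min a a' * |θ|) ^ (-N)) :=
          mul_le_mul_of_nonneg_left (add_le_add h₁ h₂) hK.le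
      _ = _ := by ring

end
end

section
/- Let α ∈ [0,1], B > 0, C > 0 and L, M, N₁, N₂ ∈ ℕ₀. Then there exists a constant C' > 0, depending only on α, B, C, L, M, N₁, N₂, with the following property. Let s ≥ 1, let h ∈ ℝ with |h| ≤ B, and set θ := arctan(−h). Let γ̂ : ℝ² → ℂ be L-times continuously differentiable with |∂^ρ γ̂(ξ)| ≤ C · min{1, s^{−1} + |ξ₁| + s^{−(1−α)}|ξ₂|}^M · ⟨|ξ|⟩^{−N₁} · ⟨ξ₂⟩^{−N₂} for all |ρ| ≤ L and all ξ ∈ ℝ². Then the function ĝ(ξ) := γ̂(A_{α,s^{−1}} (S_h)^{−T} R_θ^T A_{α,s} ξ) satisfies |∂^ρ ĝ(ξ)| ≤ C' · min{1, s^{−1} + |ξ₁| + s^{−(1−α)}|ξ₂|}^M · ⟨|ξ|⟩^{−N₁} · ⟨ξ₂⟩^{−N₂} for all |ρ| ≤ L and all ξ ∈ ℝ². (This is the key estimate showing that α-shearlet molecules are α-molecules of the same order.) -/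
open MeasureTheory Real Set
open scoped ENNReal NNReal

noncomputable section

namespace AlphaMolecules

/-- the analyst's bracket `⟨x⟩ = (1+x²)^{1/2}` -/
def brak (x : ℝ) : ℝ := Real.sqrt (1 + x ^ 2)

/-- the Euclidean norm on `ℝ × ℝ` -/
def nrm (ξ : ℝ × ℝ) : ℝ := Real.sqrt (ξ.1 ^ 2 + ξ.2 ^ 2)

/-- rotation `R_θ` by the angle `θ` -/
def rot (θ : ℝ) (v : ℝ × ℝ) : ℝ × ℝ :=
  (Real.cos θ * v.1 - Real.sin θ * v.2, Real.sin θ * v.1 + Real.cos θ * v.2)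

/-- the α-scaling matrix `A_{α,s} = diag(s, s^α)` acting on `ℝ × ℝ` -/
def ascale (α s : ℝ) (v : ℝ × ℝ) : ℝ × ℝ := (s * v.1, s ^ α * v.2)

/-- the 2-dimensional Fourier transform `ĝ(ξ) = ∫ g(x) e^{-2πi x·ξ} dx` -/
def ft2 (g : ℝ × ℝ → ℂ) (ξ : ℝ × ℝ) : ℂ :=
  ∫ x : ℝ × ℝ, Complex.exp (-2 * Real.pi * Complex.I * (x.1 * ξ.1 + x.2 * ξ.2)) * g x

/-- partial derivative in the first coordinate -/
def pd1 (f : ℝ × ℝ → ℂ) : ℝ × ℝ → ℂ := fun x => fderiv ℝ f x (1, 0)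

/-- partial derivative in the second coordinate -/
def pd2 (f : ℝ × ℝ → ℂ) : ℝ × ℝ → ℂ := fun x => fderiv ℝ f x (0, 1)

/-- the iterated partial derivative `∂^ρ` for a multi-index `ρ = (ρ₁, ρ₂)` -/
def pd (ρ : ℕ × ℕ) (f : ℝ × ℝ → ℂ) : ℝ × ℝ → ℂ := pd1^[ρ.1] (pd2^[ρ.2] f)

/-- `g` satisfies the α-molecule condition at scale `s` with constant `C`
and order `(L, M, N₁, N₂)`. -/
def MoleculeCond (α s C : ℝ) (L : ℕ) (M N₁ N₂ : ℝ) (g : ℝ × ℝ → ℂ) : Prop :=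
  ContDiff ℝ L (ft2 g) ∧
  ∀ ρ : ℕ × ℕ, ρ.1 + ρ.2 ≤ L → ∀ ξ : ℝ × ℝ,
    ‖pd ρ (ft2 g) ξ‖ ≤
      C * (min 1 (s⁻¹ + |ξ.1| + s ^ (-(1 - α)) * |ξ.2|)) ^ M
        * brak (nrm ξ) ^ (-N₁) * brak ξ.2 ^ (-N₂)

/-- the α-molecule `m(x) = s^{(1+α)/2} g(A_{α,s} R_θ (x - x₀))` -/
def mol (α s θ : ℝ) (x₀ : ℝ × ℝ) (g : ℝ × ℝ → ℂ) : ℝ × ℝ → ℂ :=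
  fun x => ((s ^ ((1 + α) / 2) : ℝ) : ℂ) * g (ascale α s (rot θ (x - x₀)))

/-- distance between two angles modulo `π` -/
def angDist (a b : ℝ) : ℝ := ⨅ n : ℤ, |a - b + n * Real.pi|

/-- the quantity `d_α` between two points of the parameter space `ℙ = ℝ₊ × 𝕋 × ℝ²` -/
def dAlpha (α : ℝ) (p q : ℝ × ℝ × (ℝ × ℝ)) : ℝ :=
  (min p.1 q.1) ^ (2 * (1 - α)) * angDist p.2.1 q.2.1 ^ 2
    + (min p.1 q.1) ^ (2 * α) * ((p.2.2.1 - q.2.2.1) ^ 2 + (p.2.2.2 - q.2.2.2) ^ 2)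
    + (min p.1 q.1) ^ (2 : ℝ)
        / (1 + (min p.1 q.1) ^ (2 * (1 - α)) * angDist p.2.1 q.2.1 ^ 2)
        * (Real.cos p.2.1 * (p.2.2.1 - q.2.2.1) - Real.sin p.2.1 * (p.2.2.2 - q.2.2.2)) ^ 2

/-- the α-scaled index distance `ω_α` -/
def omegaAlpha (α : ℝ) (p q : ℝ × ℝ × (ℝ × ℝ)) : ℝ :=
  max (p.1 / q.1) (q.1 / p.1) * (1 + dAlpha α p q)

/-- the `L²(ℝ²)` inner product `⟨f, g⟩ = ∫ f ḡ` -/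
def innerL2 (f g : ℝ × ℝ → ℂ) : ℂ := ∫ x : ℝ × ℝ, f x * (starRingEnd ℂ) (g x)

end AlphaMolecules

namespace AlphaMolecules

/-- the inverse transpose of the shear matrix, `(S_h)^{-T} v = (v₁, -h·v₁ + v₂)` -/
def shearInvT (h : ℝ) (v : ℝ × ℝ) : ℝ × ℝ := (v.1, -h * v.1 + v.2)

end AlphaMolecules

/-!
With `θ = arctan(-h)` the matrix `A_{α,s⁻¹} (S_h)^{-T} R_θ^T A_{α,s}` is upper triangular,
`T(ζ₁, ζ₂) = (a ζ₁ + b ζ₂, d ζ₂)` with `d = ⟨h⟩`, `a = d⁻¹` and `|b| ≤ |h| s^{-(1-α)}`.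
By the chain rule `∂^{(n,m)} (γ̂ ∘ T) = aⁿ (∂₁ⁿ (b ∂₁ + d ∂₂)ᵐ γ̂) ∘ T`, and the binomial expansion
of the right-hand side has coefficients of total size `|a|ⁿ (|b| + |d|)ᵐ`, bounded in terms of `B`.
It remains to compare the weight at `Tξ` and at `ξ`: the factor `s^{-(1-α)}` carried by `b`
keeps `s⁻¹ + |ξ₁| + s^{-(1-α)} |ξ₂|` within a constant factor, `|ξ| ≲ |Tξ|` because `T⁻¹` is bounded
(here `α ≤ 1` enters), and `|ξ₂| ≤ |(Tξ)₂|` because `d ≥ 1`.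
-/

namespace AlphaMolecules

open Finset

section Calculus

variable {E F : Type*} [NormedAddCommGroup E] [NormedSpace ℝ E] [NormedAddCommGroup F]
  [NormedSpace ℝ F]

theorem contDiff_fderiv_apply {f : E → F} {k : ℕ} (hf : ContDiff ℝ (k + 1 : ℕ) f) (v : E) :
    ContDiff ℝ k (fun x => fderiv ℝ f x v) :=
  (hf.fderiv_right (by norm_cast)).clm_apply contDiff_const

theorem contDiff_iterate {D : (E → F) → E → F}
    (hD : ∀ {k : ℕ} {f : E → F}, ContDiff ℝ (k + 1 : ℕ) f → ContDiff ℝ k (D f)) :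
    ∀ (i : ℕ) {k : ℕ} {f : E → F}, ContDiff ℝ (k + i : ℕ) f → ContDiff ℝ k (D^[i] f)
  | 0, _, _, hf => hf
  | i + 1, _, _, hf => contDiff_iterate hD i (hD hf)

theorem fderiv_sum_smul_apply {ι : Type*} (s : Finset ι) (c : ι → ℝ) {G : ι → E → F}
    {x : E} (hG : ∀ i ∈ s, DifferentiableAt ℝ (G i) x) (v : E) :
    fderiv ℝ (fun y => ∑ i ∈ s, c i • G i y) x v = ∑ i ∈ s, c i • fderiv ℝ (G i) x v := by
  rw [fderiv_fun_sum (A := fun i y => c i • G i y) fun i hi => (hG i hi).const_smul (c i)]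
  simp only [FunLike.coe_sum, Finset.sum_apply]
  exact Finset.sum_congr rfl fun i hi => by rw [fderiv_fun_const_smul (hG i hi)]; rfl

end Calculus

section PartialDerivatives

variable {f g : ℝ × ℝ → ℂ}

theorem contDiff_pd1 {k : ℕ} (hf : ContDiff ℝ (k + 1 : ℕ) f) : ContDiff ℝ k (pd1 f) :=
  contDiff_fderiv_apply hf _

theorem contDiff_pd2 {k : ℕ} (hf : ContDiff ℝ (k + 1 : ℕ) f) : ContDiff ℝ k (pd2 f) :=
  contDiff_fderiv_apply hf _

theorem contDiff_pd {k i j : ℕ} (hf : ContDiff ℝ (k + i + j : ℕ) f) :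
    ContDiff ℝ k (pd (i, j) f) :=
  contDiff_iterate contDiff_pd1 i (contDiff_iterate contDiff_pd2 j hf)

theorem differentiable_pd {i j : ℕ} (hf : ContDiff ℝ (i + j + 1 : ℕ) f) :
    Differentiable ℝ (pd (i, j) f) :=
  (contDiff_pd (k := 1) (hf.of_le (by norm_cast; omega))).differentiable one_ne_zero

theorem pd1_pd2 (hf : ContDiff ℝ 2 f) : pd1 (pd2 f) = pd2 (pd1 f) := by
  funext x
  have hd : DifferentiableAt ℝ (fderiv ℝ f) x :=
    ((hf.fderiv_right (m := 1) (by norm_num)).differentiable one_ne_zero) x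
  change fderiv ℝ (fun y => fderiv ℝ f y (0, 1)) x (1, 0)
    = fderiv ℝ (fun y => fderiv ℝ f y (1, 0)) x (0, 1)
  rw [fderiv_clm_apply hd (differentiableAt_const _),
    fderiv_clm_apply hd (differentiableAt_const _)]
  simpa using (hf.contDiffAt.isSymmSndFDerivAt (by simp)) (1, 0) (0, 1)

theorem pd2_pd1_iterate {i : ℕ} (hf : ContDiff ℝ (i + 1 : ℕ) f) :
    pd2 (pd1^[i] f) = pd1^[i] (pd2 f) := by
  induction i generalizing f with
  | zero => rfl
  | succ i ih =>
    rw [Function.iterate_succ_apply, ih (contDiff_pd1 hf),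
      ← pd1_pd2 (hf.of_le (by norm_cast; omega)), Function.iterate_succ_apply]

theorem pd1_pd (i j : ℕ) : pd1 (pd (i, j) f) = pd (i + 1, j) f :=
  (Function.iterate_succ_apply' _ _ _).symm

theorem pd2_pd {i j : ℕ} (hf : ContDiff ℝ (i + j + 1 : ℕ) f) :
    pd2 (pd (i, j) f) = pd (i, j + 1) f := by
  change pd2 (pd1^[i] (pd2^[j] f)) = pd1^[i] (pd2^[j + 1] f)
  rw [pd2_pd1_iterate (contDiff_iterate contDiff_pd2 j (hf.of_le (by norm_cast; omega))),
    ← Function.iterate_succ_apply' pd2]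

theorem pd1_const_smul (c : ℝ) {x : ℝ × ℝ} (hg : DifferentiableAt ℝ g x) :
    pd1 (c • g) x = c • pd1 g x := by
  rw [pd1, fderiv_const_smul hg]
  rfl

end PartialDerivatives

section Binomial

variable {E : Type*}

theorem sum_antidiagonal_choose_succ_smul {R : Type*} [CommSemiring R] [AddCommMonoid E]
    [Module R E] (b d : R) (P : ℕ → ℕ → E) (m : ℕ) :
    ∑ p ∈ antidiagonal (m + 1), ((m + 1).choose p.1 * b ^ p.1 * d ^ p.2 : R) • P p.1 p.2
      = b • ∑ p ∈ antidiagonal m, (m.choose p.1 * b ^ p.1 * d ^ p.2 : R) • P (p.1 + 1) p.2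
        + d • ∑ p ∈ antidiagonal m, (m.choose p.1 * b ^ p.1 * d ^ p.2 : R) • P p.1 (p.2 + 1) := by
  calc _ = ∑ p ∈ antidiagonal (m + 1), (m + 1).choose p.1 • (b ^ p.1 * d ^ p.2) • P p.1 p.2 :=
        sum_congr rfl fun p _ => by rw [mul_assoc, ← smul_smul, Nat.cast_smul_eq_nsmul]
    _ = _ := sum_antidiagonal_choose_succ_nsmul (fun i j => (b ^ i * d ^ j) • P i j) m
    _ = _ := by
        rw [add_comm, smul_sum, smul_sum]
        congr 1 <;> refine sum_congr rfl fun p hp => ?_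
        · rw [← Nat.choose_symm_of_eq_add (mem_antidiagonal.mp hp).symm,
            ← Nat.cast_smul_eq_nsmul R, smul_smul, smul_smul]
          ring_nf
        · rw [← Nat.cast_smul_eq_nsmul R, smul_smul, smul_smul]
          ring_nf

theorem norm_sum_antidiagonal_choose_smul_le [SeminormedAddCommGroup E] [NormedSpace ℝ E]
    (b d : ℝ) {m : ℕ} (P : ℕ → ℕ → E) {W : ℝ}
    (hP : ∀ p ∈ antidiagonal m, ‖P p.1 p.2‖ ≤ W) :
    ‖∑ p ∈ antidiagonal m, (m.choose p.1 * b ^ p.1 * d ^ p.2 : ℝ) • P p.1 p.2‖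
      ≤ (|b| + |d|) ^ m * W := by
  have hW : 0 ≤ W := (norm_nonneg _).trans (hP (0, m) (by simp))
  calc _ ≤ ∑ p ∈ antidiagonal m, (m.choose p.1 * |b| ^ p.1 * |d| ^ p.2) * W := by
        refine (norm_sum_le _ _).trans (sum_le_sum fun p hp => ?_)
        rw [norm_smul, Real.norm_eq_abs, abs_mul, abs_mul, abs_pow, abs_pow, Nat.abs_cast]
        exact mul_le_mul_of_nonneg_left (hP p hp) (by positivity)
    _ = (|b| + |d|) ^ m * W := by
        rw [← sum_mul, (Commute.all _ _).add_pow']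
        simp only [nsmul_eq_mul, mul_assoc]

end Binomial

section UpperTriangular

variable {f g : ℝ × ℝ → ℂ} (a b d : ℝ)

def upperTri : ℝ × ℝ →L[ℝ] ℝ × ℝ :=
  (a • ContinuousLinearMap.fst ℝ ℝ ℝ + b • ContinuousLinearMap.snd ℝ ℝ ℝ).prod
    (d • ContinuousLinearMap.snd ℝ ℝ ℝ)

@[simp] theorem upperTri_apply (x : ℝ × ℝ) :
    upperTri a b d x = (a * x.1 + b * x.2, d * x.2) := by
  simp [upperTri]

variable {a b d}

theorem pd1_comp_upperTri {x : ℝ × ℝ} (hg : DifferentiableAt ℝ g (upperTri a b d x)) :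
    pd1 (g ∘ upperTri a b d) x = a • pd1 g (upperTri a b d x) := by
  rw [pd1, fderiv_comp x hg (upperTri a b d).differentiableAt, ContinuousLinearMap.fderiv,
    ContinuousLinearMap.comp_apply, show upperTri a b d (1, 0) = a • (1, 0) by simp, map_smul]
  rfl

theorem pd2_comp_upperTri {x : ℝ × ℝ} (hg : DifferentiableAt ℝ g (upperTri a b d x)) :
    pd2 (g ∘ upperTri a b d) x
      = b • pd1 g (upperTri a b d x) + d • pd2 g (upperTri a b d x) := by
  rw [pd2, fderiv_comp x hg (upperTri a b d).differentiableAt, ContinuousLinearMap.fderiv,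
    ContinuousLinearMap.comp_apply,
    show upperTri a b d (0, 1) = b • (1, 0) + d • (0, 1) by simp, map_add, map_smul, map_smul]
  rfl

variable (b d)

/-- `∂₁ⁿ (b ∂₁ + d ∂₂)ᵐ f`, expanded by the binomial theorem. -/
def binomPd (n m : ℕ) (f : ℝ × ℝ → ℂ) : ℝ × ℝ → ℂ := fun y =>
  ∑ p ∈ antidiagonal m, (m.choose p.1 * b ^ p.1 * d ^ p.2 : ℝ) • pd (n + p.1, p.2) f y

variable {b d}

theorem contDiff_binomPd {k n m : ℕ} (hf : ContDiff ℝ (k + n + m : ℕ) f) :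
    ContDiff ℝ k (binomPd b d n m f) :=
  ContDiff.sum fun p hp => (contDiff_pd (hf.of_le (by
    have := mem_antidiagonal.mp hp; norm_cast; omega))).const_smul _

theorem differentiable_pd_of_antidiagonal {n m : ℕ} (hf : ContDiff ℝ (n + m + 1 : ℕ) f)
    {p : ℕ × ℕ} (hp : p ∈ antidiagonal m) : Differentiable ℝ (pd (n + p.1, p.2) f) :=
  differentiable_pd (hf.of_le (by have := mem_antidiagonal.mp hp; norm_cast; omega))

theorem pd1_binomPd {n m : ℕ} (hf : ContDiff ℝ (n + m + 1 : ℕ) f) :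
    pd1 (binomPd b d n m f) = binomPd b d (n + 1) m f := by
  funext y
  unfold binomPd
  rw [pd1, fderiv_sum_smul_apply _ _ fun p hp =>
    (differentiable_pd_of_antidiagonal hf hp).differentiableAt]
  refine sum_congr rfl fun p _ => ?_
  rw [← pd1, pd1_pd, Nat.add_right_comm]

theorem binomPd_succ {n m : ℕ} (hf : ContDiff ℝ (n + m + 1 : ℕ) f) (y : ℝ × ℝ) :
    b • pd1 (binomPd b d n m f) y + d • pd2 (binomPd b d n m f) y
      = binomPd b d n (m + 1) f y := by
  have hdiff : ∀ p ∈ antidiagonal m, DifferentiableAt ℝ (pd (n + p.1, p.2) f) y :=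
    fun p hp => (differentiable_pd_of_antidiagonal hf hp).differentiableAt
  rw [pd1_binomPd hf, pd2]
  unfold binomPd
  rw [fderiv_sum_smul_apply _ _ hdiff,
    sum_antidiagonal_choose_succ_smul b d (fun i j => pd (n + i, j) f y)]
  congr 2 <;> refine sum_congr rfl fun p hp => ?_
  · rw [Nat.add_right_comm, Nat.add_assoc]
  rw [← pd2_pd (hf.of_le (by have := mem_antidiagonal.mp hp; norm_cast; omega))]
  rfl

theorem pd2_iterate_comp_upperTri {m : ℕ} (hf : ContDiff ℝ m f) :
    pd2^[m] (f ∘ upperTri a b d) = binomPd b d 0 m f ∘ upperTri a b d := by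
  induction m with
  | zero => funext x; simp [binomPd, pd]
  | succ m ih =>
    have hf' : ContDiff ℝ (0 + m + 1 : ℕ) f := by simpa using hf
    funext x
    rw [Function.iterate_succ_apply', ih (hf.of_le (by norm_cast; omega)),
      pd2_comp_upperTri ((contDiff_binomPd (k := 1) (hf.of_le (by norm_cast; omega))).differentiable
        one_ne_zero _), binomPd_succ hf']
    rfl

theorem pd_comp_upperTri {n m : ℕ} (hf : ContDiff ℝ (n + m : ℕ) f) :
    pd (n, m) (f ∘ upperTri a b d) = a ^ n • (binomPd b d n m f ∘ upperTri a b d) := by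
  induction n with
  | zero => simpa [pd] using pd2_iterate_comp_upperTri (hf.of_le (by norm_cast; omega))
  | succ n ih =>
    have hG : Differentiable ℝ (binomPd b d n m f) :=
      (contDiff_binomPd (k := 1) (hf.of_le (by norm_cast; omega))).differentiable one_ne_zero
    funext x
    rw [← pd1_pd, ih (hf.of_le (by norm_cast; omega)),
      pd1_const_smul _ ((hG _).comp x (upperTri a b d).differentiableAt), pd1_comp_upperTri (hG _),
      pd1_binomPd (hf.of_le (by norm_cast; omega)), smul_smul, pow_succ]
    rfl

theorem norm_pd_comp_upperTri_le {L n m : ℕ} (hf : ContDiff ℝ L f) (hnm : n + m ≤ L)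
    (x : ℝ × ℝ) {W : ℝ}
    (hW : ∀ p ∈ antidiagonal m, ‖pd (n + p.1, p.2) f (upperTri a b d x)‖ ≤ W) :
    ‖pd (n, m) (f ∘ upperTri a b d) x‖ ≤ |a| ^ n * ((|b| + |d|) ^ m * W) := by
  rw [pd_comp_upperTri (hf.of_le (by norm_cast)), Pi.smul_apply, norm_smul, Real.norm_eq_abs,
    abs_pow]
  exact mul_le_mul_of_nonneg_left
    (norm_sum_antidiagonal_choose_smul_le b d (fun i j => pd (n + i, j) f _) hW) (by positivity)

end UpperTriangular

section Weights

theorem one_le_brak (x : ℝ) : 1 ≤ brak x :=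
  Real.one_le_sqrt.mpr (by nlinarith)

theorem brak_pos (x : ℝ) : 0 < brak x := one_pos.trans_le (one_le_brak x)

theorem brak_le_brak {x y : ℝ} (h : |x| ≤ |y|) : brak x ≤ brak y :=
  Real.sqrt_le_sqrt (by nlinarith [sq_abs x, sq_abs y, abs_nonneg x])

theorem brak_le_mul_brak {K x y : ℝ} (hK : 1 ≤ K) (h : |x| ≤ K * |y|) : brak x ≤ K * brak y := by
  calc brak x ≤ brak (K * y) :=
        brak_le_brak (by rwa [abs_mul, abs_of_nonneg (show (0 : ℝ) ≤ K by linarith)])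
    _ = Real.sqrt (1 + K ^ 2 * y ^ 2) := by rw [brak, mul_pow]
    _ ≤ Real.sqrt (K ^ 2 * (1 + y ^ 2)) := Real.sqrt_le_sqrt (by nlinarith)
    _ = K * brak y := by rw [Real.sqrt_mul (by positivity), Real.sqrt_sq (by linarith), brak]

theorem nrm_nonneg (ξ : ℝ × ℝ) : 0 ≤ nrm ξ := Real.sqrt_nonneg _

theorem abs_fst_le_nrm (ξ : ℝ × ℝ) : |ξ.1| ≤ nrm ξ :=
  Real.abs_le_sqrt (by nlinarith)

theorem abs_snd_le_nrm (ξ : ℝ × ℝ) : |ξ.2| ≤ nrm ξ :=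
  Real.abs_le_sqrt (by nlinarith)

theorem nrm_le_abs_add_abs (ξ : ℝ × ℝ) : nrm ξ ≤ |ξ.1| + |ξ.2| :=
  Real.sqrt_le_iff.mpr
    ⟨by positivity, by nlinarith [sq_abs ξ.1, sq_abs ξ.2, abs_nonneg ξ.1, abs_nonneg ξ.2]⟩

theorem min_one_le_mul_min_one {K u v : ℝ} (hK : 1 ≤ K) (h : u ≤ K * v) :
    min 1 u ≤ K * min 1 v := by
  rcases le_total 1 v with hv | hv
  · rw [min_eq_left hv, mul_one]
    exact (min_le_left 1 u).trans hK
  · rw [min_eq_right hv]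
    exact (min_le_right 1 u).trans h

theorem inv_pow_le_mul_inv_pow {K x y : ℝ} (hx : 0 < x) (hK : 0 < K) (h : x ≤ K * y) (N : ℕ) :
    (y ^ N)⁻¹ ≤ K ^ N * (x ^ N)⁻¹ := by
  have hy : 0 < y := (mul_pos_iff_of_pos_left hK).mp (hx.trans_le h)
  rw [← div_eq_mul_inv, ← div_pow, ← inv_pow]
  gcongr
  rwa [inv_le_comm₀ hy (by positivity), inv_div, div_le_iff₀' hK]

variable (α s : ℝ) (M N₁ N₂ : ℕ)

def moleculeWeight (ξ : ℝ × ℝ) : ℝ :=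
  (min 1 (s⁻¹ + |ξ.1| + s ^ (-(1 - α)) * |ξ.2|)) ^ (M : ℝ)
    * brak (nrm ξ) ^ (-(N₁ : ℝ)) * brak ξ.2 ^ (-(N₂ : ℝ))

variable {α s M N₁ N₂}

theorem moleculeWeight_nonneg (hs : 0 < s) (ξ : ℝ × ℝ) : 0 ≤ moleculeWeight α s M N₁ N₂ ξ :=
  mul_nonneg (mul_nonneg (Real.rpow_nonneg (le_min zero_le_one (by positivity)) _)
    (Real.rpow_nonneg (brak_pos _).le _)) (Real.rpow_nonneg (brak_pos _).le _)

theorem moleculeWeight_le_of_le {K : ℝ} {ξ η : ℝ × ℝ} (hs : 0 < s) (hK : 1 ≤ K)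
    (hφ : s⁻¹ + |η.1| + s ^ (-(1 - α)) * |η.2| ≤ K * (s⁻¹ + |ξ.1| + s ^ (-(1 - α)) * |ξ.2|))
    (hnrm : nrm ξ ≤ K * nrm η) (hsnd : |ξ.2| ≤ |η.2|) :
    moleculeWeight α s M N₁ N₂ η ≤ K ^ M * K ^ N₁ * moleculeWeight α s M N₁ N₂ ξ := by
  have hφξ : 0 ≤ s⁻¹ + |ξ.1| + s ^ (-(1 - α)) * |ξ.2| := by positivity
  have hφη : 0 ≤ s⁻¹ + |η.1| + s ^ (-(1 - α)) * |η.2| := by positivity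
  simp only [moleculeWeight, Real.rpow_natCast, Real.rpow_neg (brak_pos _).le]
  calc _ ≤ (K * min 1 (s⁻¹ + |ξ.1| + s ^ (-(1 - α)) * |ξ.2|)) ^ M
          * (K ^ N₁ * (brak (nrm ξ) ^ N₁)⁻¹) * (brak ξ.2 ^ N₂)⁻¹ := by
        have hbrak : brak (nrm ξ) ≤ K * brak (nrm η) :=
          brak_le_mul_brak hK (by simpa only [abs_of_nonneg (nrm_nonneg _)] using hnrm)
        have hinv : ∀ (x : ℝ) (N : ℕ), 0 ≤ (brak x ^ N)⁻¹ :=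
          fun x N => inv_nonneg.mpr (pow_nonneg (brak_pos x).le N)
        have hK0 : 0 ≤ K := by linarith
        refine mul_le_mul (mul_le_mul ?_ ?_ (hinv _ _) ?_) ?_ (hinv _ _) ?_
        · exact pow_le_pow_left₀ (le_min zero_le_one hφη) (min_one_le_mul_min_one hK hφ) _
        · exact inv_pow_le_mul_inv_pow (brak_pos _) (by linarith) hbrak _
        · exact pow_nonneg (mul_nonneg hK0 (le_min zero_le_one hφξ)) _
        · exact inv_anti₀ (pow_pos (brak_pos _) _)
            (pow_le_pow_left₀ (brak_pos _).le (brak_le_brak hsnd) _)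
        · exact mul_nonneg (pow_nonneg (mul_nonneg hK0 (le_min zero_le_one hφξ)) _)
            (mul_nonneg (pow_nonneg hK0 _) (hinv _ _))
    _ = _ := by ring

theorem moleculeWeight_upperTri_le {α s B a b d : ℝ} {M N₁ N₂ : ℕ} (hs : 0 < s)
    (ht : s ^ (-(1 - α)) ≤ 1) (had : a * d = 1) (hd : 1 ≤ d) (hdB : d ≤ 1 + B)
    (hb : |b| ≤ B * s ^ (-(1 - α))) (ξ : ℝ × ℝ) :
    moleculeWeight α s M N₁ N₂ (upperTri a b d ξ)
      ≤ ((2 + B) ^ 2) ^ M * ((2 + B) ^ 2) ^ N₁ * moleculeWeight α s M N₁ N₂ ξ := by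
  set t := s ^ (-(1 - α))
  set η := upperTri a b d ξ with hη
  have ht0 : 0 ≤ t := by positivity
  have hB : 0 ≤ B := by linarith
  have ha : 0 < a := pos_of_mul_pos_left (had ▸ one_pos) (by linarith)
  have ha1 : a ≤ 1 := by nlinarith
  have hb' : |b| ≤ B := by nlinarith
  have hη2 : |η.2| = d * |ξ.2| := by simp [hη, abs_mul, abs_of_pos (one_pos.trans_le hd)]
  have hξη2 : |ξ.2| ≤ |η.2| := by rw [hη2]; nlinarith [abs_nonneg ξ.2]
  have hK : 1 + 2 * B ≤ (2 + B) ^ 2 := by nlinarith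
  apply moleculeWeight_le_of_le hs (by nlinarith)
  · have hη1 : |η.1| ≤ |ξ.1| + B * (t * |ξ.2|) := by
      calc |η.1| ≤ a * |ξ.1| + |b| * |ξ.2| := by
            simpa [hη, abs_mul, abs_of_pos ha] using abs_add_le (a * ξ.1) (b * ξ.2)
        _ ≤ _ := by
            nlinarith [mul_le_mul_of_nonneg_right ha1 (abs_nonneg ξ.1),
              mul_le_mul_of_nonneg_right hb (abs_nonneg ξ.2)]
    have hd2 : t * |η.2| ≤ (1 + B) * (t * |ξ.2|) := by
      rw [hη2]; nlinarith [mul_nonneg ht0 (abs_nonneg ξ.2)]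
    have : 0 ≤ s⁻¹ + |ξ.1| := by positivity
    nlinarith [mul_nonneg ht0 (abs_nonneg ξ.2)]
  · have hξ1 : |ξ.1| ≤ (1 + B) * |η.1| + (1 + B) * B * |η.2| := by
      have : ξ.1 = d * η.1 - d * b * ξ.2 := by
        simp only [hη, upperTri_apply]
        linear_combination (-ξ.1) * had
      calc |ξ.1| ≤ d * |η.1| + d * |b| * |ξ.2| := by
            rw [this]
            refine (abs_sub _ _).trans_eq ?_
            rw [abs_mul, abs_mul, abs_mul, abs_of_pos (one_pos.trans_le hd)]
        _ ≤ _ := by gcongr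
    calc nrm ξ ≤ |ξ.1| + |ξ.2| := nrm_le_abs_add_abs ξ
      _ ≤ (1 + B) * |η.1| + (1 + B) * B * |η.2| + |η.2| := by gcongr
      _ ≤ (1 + B) * nrm η + (1 + B) * B * nrm η + nrm η := by
          gcongr
          · exact abs_fst_le_nrm η
          · exact abs_snd_le_nrm η
          · exact abs_snd_le_nrm η
      _ ≤ _ := by nlinarith [nrm_nonneg η]
  · exact hξη2

end Weights

theorem ascale_shearInvT_rot_ascale {α s : ℝ} (hs : 0 < s) (h : ℝ) (ζ : ℝ × ℝ) :
    ascale α s⁻¹ (shearInvT h (rot (-(Real.arctan (-h))) (ascale α s ζ)))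
      = upperTri (Real.sqrt (1 + h ^ 2))⁻¹ (-(h * (Real.sqrt (1 + h ^ 2))⁻¹ * s ^ (-(1 - α))))
          (Real.sqrt (1 + h ^ 2)) ζ := by
  have hsq : Real.sqrt (1 + h ^ 2) ^ 2 = 1 + h ^ 2 := Real.sq_sqrt (by positivity)
  have hsqrt : Real.sqrt (1 + h ^ 2) ≠ 0 := by positivity
  have hsα : s ^ (-(1 - α)) = s ^ α * s⁻¹ := by
    rw [neg_sub, Real.rpow_sub hs, Real.rpow_one, div_eq_mul_inv]
  simp only [ascale, shearInvT, rot, upperTri_apply, Real.arctan_neg, neg_neg, Real.cos_arctan,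
    Real.sin_arctan, Real.inv_rpow hs.le, hsα, Prod.mk.injEq]
  have : s ^ α ≠ 0 := (Real.rpow_pos_of_pos hs α).ne'
  constructor
  · field_simp
    ring
  · field_simp
    rw [hsq]
    ring

theorem norm_pd_comp_upperTri_le_moleculeWeight {α s B C a b d : ℝ} {L M N₁ N₂ : ℕ}
    {f : ℝ × ℝ → ℂ} (hC : 0 ≤ C) (hs : 0 < s) (ht : s ^ (-(1 - α)) ≤ 1) (had : a * d = 1)
    (hd : 1 ≤ d) (hdB : d ≤ 1 + B) (hb : |b| ≤ B * s ^ (-(1 - α))) (hf : ContDiff ℝ L f)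
    (hf_le : ∀ ρ : ℕ × ℕ, ρ.1 + ρ.2 ≤ L → ∀ ξ, ‖pd ρ f ξ‖ ≤ C * moleculeWeight α s M N₁ N₂ ξ)
    {ρ : ℕ × ℕ} (hρ : ρ.1 + ρ.2 ≤ L) (ξ : ℝ × ℝ) :
    ‖pd ρ (f ∘ upperTri a b d) ξ‖
      ≤ C * ((2 + B) ^ 2) ^ L * (((2 + B) ^ 2) ^ M * ((2 + B) ^ 2) ^ N₁
        * moleculeWeight α s M N₁ N₂ ξ) := by
  obtain ⟨n, m⟩ := ρ
  simp only at hρ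
  have hB : 0 ≤ B := by linarith
  have ha : 0 < a := pos_of_mul_pos_left (had ▸ one_pos) (by linarith)
  calc _ ≤ |a| ^ n * ((|b| + |d|) ^ m * (C * moleculeWeight α s M N₁ N₂ (upperTri a b d ξ))) :=
        norm_pd_comp_upperTri_le hf hρ ξ fun p hp =>
          hf_le _ (by have := mem_antidiagonal.mp hp; simp only; omega) _
    _ ≤ 1 * (((2 + B) ^ 2) ^ L * (C * (((2 + B) ^ 2) ^ M * ((2 + B) ^ 2) ^ N₁
          * moleculeWeight α s M N₁ N₂ ξ))) := by
        have := moleculeWeight_nonneg (α := α) (M := M) (N₁ := N₁) (N₂ := N₂) hs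
          (upperTri a b d ξ)
        gcongr
        · rw [abs_of_pos ha]
          exact pow_le_one₀ ha.le (by nlinarith)
        · refine (pow_le_pow_left₀ (by positivity) ?_ m).trans
            (pow_le_pow_right₀ (by nlinarith) (show m ≤ L by omega))
          rw [abs_of_pos (one_pos.trans_le hd)]
          nlinarith [mul_le_of_le_one_right hB ht, abs_nonneg b]
        · exact moleculeWeight_upperTri_le hs ht had hd hdB hb ξ
    _ = _ := by ring

end AlphaMolecules

open AlphaMolecules

/-- key estimate in Proposition 3.9: if `γ̂` satisfies the α-molecule
frequency estimate of order `(L, M, N₁, N₂)` at scale `s ≥ 1`, and `|h| ≤ B` with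
`θ = arctan(−h)`, then `ĝ(ξ) := γ̂(A_{α,s⁻¹}(S_h)^{-T}R_θ^T A_{α,s} ξ)` satisfies the
same estimate with a constant `C'` depending only on `α, B, C, L, M, N₁, N₂`. -/
theorem stmt14 (α : ℝ) (hα : α ∈ Set.Icc (0 : ℝ) 1) (B C : ℝ) (hB : 0 < B) (hC : 0 < C)
    (L M N₁ N₂ : ℕ) :
    ∃ C' > (0 : ℝ), ∀ s h : ℝ, 1 ≤ s → |h| ≤ B →
      ∀ γhat : ℝ × ℝ → ℂ, ContDiff ℝ L γhat →
      (∀ ρ : ℕ × ℕ, ρ.1 + ρ.2 ≤ L → ∀ ξ : ℝ × ℝ,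
        ‖pd ρ γhat ξ‖ ≤
          C * (min 1 (s⁻¹ + |ξ.1| + s ^ (-(1 - α)) * |ξ.2|)) ^ (M : ℝ)
            * brak (nrm ξ) ^ (-(N₁ : ℝ)) * brak ξ.2 ^ (-(N₂ : ℝ))) →
      ∀ ρ : ℕ × ℕ, ρ.1 + ρ.2 ≤ L → ∀ ξ : ℝ × ℝ,
        ‖pd ρ (fun ζ => γhat
            (ascale α s⁻¹ (shearInvT h (rot (-(Real.arctan (-h))) (ascale α s ζ))))) ξ‖
          ≤ C' * (min 1 (s⁻¹ + |ξ.1| + s ^ (-(1 - α)) * |ξ.2|)) ^ (M : ℝ)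
              * brak (nrm ξ) ^ (-(N₁ : ℝ)) * brak ξ.2 ^ (-(N₂ : ℝ)) := by
  obtain ⟨-, hα1⟩ := hα
  refine ⟨C * ((2 + B) ^ 2) ^ L * (((2 + B) ^ 2) ^ M * ((2 + B) ^ 2) ^ N₁), by positivity, ?_⟩
  intro s h hs hhB γhat hγ hγ_le ρ hρ ξ
  have hs0 : 0 < s := one_pos.trans_le hs
  simp_rw [ascale_shearInvT_rot_ascale hs0 h]
  set d := Real.sqrt (1 + h ^ 2)
  have hd : 1 ≤ d := Real.one_le_sqrt.mpr (by nlinarith)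
  have hdB : d ≤ 1 + B := Real.sqrt_le_iff.mpr ⟨by linarith, by nlinarith [sq_abs h, abs_nonneg h]⟩
  have hb : |-(h * d⁻¹ * s ^ (-(1 - α)))| ≤ B * s ^ (-(1 - α)) := by
    rw [abs_neg, abs_mul, abs_mul, abs_inv, abs_of_pos (one_pos.trans_le hd),
      abs_of_pos (Real.rpow_pos_of_pos hs0 _)]
    gcongr
    exact (mul_le_of_le_one_right (abs_nonneg h) (inv_le_one_of_one_le₀ hd)).trans hhB
  have := norm_pd_comp_upperTri_le_moleculeWeight hC.le hs0
    (Real.rpow_le_one_of_one_le_of_nonpos hs (by linarith)) (inv_mul_cancel₀ (by positivity))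
    hd hdB hb hγ (fun ρ hρ ξ => by simpa only [moleculeWeight, mul_assoc] using hγ_le ρ hρ ξ) hρ ξ
  simpa only [moleculeWeight, mul_assoc, Function.comp_def] using this
end
end
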